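/- The map Ψ : (0,∞) × ℝ → ℝ² \ {0} defined by x = c^{1/3} ρ^{1/3} C(θT_*), y = c^{2/3} ρ^{2/3} S(θT_*), with c = 3/T_*, has Jacobian determinant of absolute value 1 wherever defined (it is measure preserving). -/

import Mathlib

/-! The map has separated variables, so its Jacobian is `f'g·hk' − fg'·h'k`. With
`f(ρ) = c^{1/3}ρ^{1/3}` and `h(ρ) = c^{2/3}ρ^{2/3}` the radial factors combine to `c/3`, the
angular derivatives `Ċ = S`, `Ṡ = −C³` bring a factor `T_*`, and what remains is
`−(c T_*/3)(C⁴ + 2S²) = −1` by conservation of the energy `2S² + C⁴`. -/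

open ContinuousLinearMap

theorem Real.rpow_one_third_mul_rpow_two_thirds {x : ℝ} (hx : 0 ≤ x) :
    x ^ ((1 : ℝ) / 3) * x ^ ((2 : ℝ) / 3) = x := by
  rw [← Real.rpow_add' hx (by norm_num)]
  norm_num

theorem ContinuousLinearMap.det_eq_fin_two (L : ℝ × ℝ →L[ℝ] ℝ × ℝ) :
    L.det = (L (1, 0)).1 * (L (0, 1)).2 - (L (1, 0)).2 * (L (0, 1)).1 := by
  change LinearMap.det (L : ℝ × ℝ →ₗ[ℝ] ℝ × ℝ) = _
  rw [← LinearMap.det_toMatrix (Module.Basis.finTwoProd ℝ), Matrix.det_fin_two]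
  simp only [LinearMap.toMatrix_apply, Module.Basis.finTwoProd_zero,
    Module.Basis.finTwoProd_one, Module.Basis.coe_finTwoProd_repr, coe_coe,
    Matrix.cons_val_zero, Matrix.cons_val_one, Matrix.cons_val_fin_one]
  ring

theorem det_fderiv_separable {f g h k : ℝ → ℝ} {f' g' h' k' : ℝ} {p : ℝ × ℝ}
    (hf : HasDerivAt f f' p.1) (hg : HasDerivAt g g' p.2)
    (hh : HasDerivAt h h' p.1) (hk : HasDerivAt k k' p.2) :
    (fderiv ℝ (fun q : ℝ × ℝ => (f q.1 * g q.2, h q.1 * k q.2)) p).det =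
      f' * g p.2 * (h p.1 * k') - f p.1 * g' * (h' * k p.2) := by
  have hfst {u : ℝ → ℝ} {u' : ℝ} (hu : HasDerivAt u u' p.1) :
      HasFDerivAt (fun q : ℝ × ℝ => u q.1) (u' • fst ℝ ℝ ℝ) p :=
    hu.comp_hasFDerivAt p hasFDerivAt_fst
  have hsnd {u : ℝ → ℝ} {u' : ℝ} (hu : HasDerivAt u u' p.2) :
      HasFDerivAt (fun q : ℝ × ℝ => u q.2) (u' • snd ℝ ℝ ℝ) p :=
    hu.comp_hasFDerivAt p hasFDerivAt_snd
  have hΦ : HasFDerivAt (fun q : ℝ × ℝ => (f q.1 * g q.2, h q.1 * k q.2)) _ p :=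
    ((hfst hf).mul (hsnd hg)).prodMk ((hfst hh).mul (hsnd hk))
  rw [hΦ.fderiv, det_eq_fin_two]
  simp only [prod_apply, add_apply, smul_apply, coe_fst', coe_snd', smul_eq_mul]
  ring

theorem quartic_oscillator_energy_eq {C S : ℝ → ℝ}
    (hC : ∀ t, HasDerivAt C (S t) t) (hS : ∀ t, HasDerivAt S (-(C t) ^ 3) t) (t : ℝ) :
    2 * S t ^ 2 + C t ^ 4 = 2 * S 0 ^ 2 + C 0 ^ 4 := by
  have hE (u : ℝ) : HasDerivAt (fun t => 2 * S t ^ 2 + C t ^ 4) 0 u :=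
    ((((hS u).fun_pow 2).const_mul 2).fun_add ((hC u).fun_pow 4)).congr_deriv (by push_cast; ring)
  exact is_const_of_deriv_eq_zero (fun u => (hE u).differentiableAt) (fun u => (hE u).deriv) t 0

theorem action_angle_measure_preserving_general (C S : ℝ → ℝ)
    (hC : ∀ t, HasDerivAt C (S t) t)
    (hS : ∀ t, HasDerivAt S (-(C t) ^ 3) t)
    (hC0 : C 0 = 1) (hS0 : S 0 = 0)
    (T : ℝ) (hT : 0 < T)
    (Ψ : ℝ × ℝ → ℝ × ℝ)
    (hΨ : Ψ = fun p =>
      ((3 / T) ^ ((1 : ℝ) / 3) * p.1 ^ ((1 : ℝ) / 3) * C (p.2 * T),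
       (3 / T) ^ ((2 : ℝ) / 3) * p.1 ^ ((2 : ℝ) / 3) * S (p.2 * T))) :
    ∀ p : ℝ × ℝ, 0 < p.1 → |(fderiv ℝ Ψ p).det| = 1 := by
  intro p hp
  have hangle {u u' : ℝ → ℝ} (hu : ∀ t, HasDerivAt u (u' t) t) :
      HasDerivAt (fun θ => u (θ * T)) (u' (p.2 * T) * T) p.2 :=
    (hu _).comp p.2 (hasDerivAt_mul_const T)
  have hradius (r : ℝ) :
      HasDerivAt (fun ρ => (3 / T) ^ r * ρ ^ r) ((3 / T) ^ r * (r * (p.1 ^ r / p.1))) p.1 := by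
    simpa only [Real.rpow_sub_one hp.ne'] using
      (Real.hasDerivAt_rpow_const (p := r) (Or.inl hp.ne')).const_mul ((3 / T) ^ r)
  have hc : (3 / T) ^ ((1 : ℝ) / 3) * (3 / T) ^ ((2 : ℝ) / 3) * T = 3 := by
    rw [Real.rpow_one_third_mul_rpow_two_thirds (by positivity)]
    field_simp
  have hρ : p.1 ^ ((1 : ℝ) / 3) * p.1 ^ ((2 : ℝ) / 3) / p.1 = 1 := by
    rw [Real.rpow_one_third_mul_rpow_two_thirds hp.le, div_self hp.ne']
  have henergy : 2 * S (p.2 * T) ^ 2 + C (p.2 * T) ^ 4 = 1 := by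
    simpa [hC0, hS0] using quartic_oscillator_energy_eq hC hS (p.2 * T)
  have hdet : (fderiv ℝ Ψ p).det = -1 := by
    rw [hΨ, det_fderiv_separable (hradius _) (hangle hC) (hradius _) (hangle hS)]
    linear_combination
      (-(1 / 3) * (p.1 ^ ((1 : ℝ) / 3) * p.1 ^ ((2 : ℝ) / 3) / p.1) *
        (2 * S (p.2 * T) ^ 2 + C (p.2 * T) ^ 4)) * hc
      - (2 * S (p.2 * T) ^ 2 + C (p.2 * T) ^ 4) * hρ - henergy
  rw [hdet]
  norm_num

/-- The action-angle map `Ψ(ρ,θ) = (c^{1/3}ρ^{1/3}C(θT_*), c^{2/3}ρ^{2/3}S(θT_*))`,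
with `c = 3/T_*` and `(C,S)` the solution of `Ċ = S`, `Ṡ = −C³` with
`(C(0),S(0)) = (1,0)` of minimal period `T_*`, has Jacobian determinant of absolute
value `1` wherever defined. -/
theorem action_angle_measure_preserving (C S : ℝ → ℝ)
    (hC : ∀ t, HasDerivAt C (S t) t)
    (hS : ∀ t, HasDerivAt S (-(C t) ^ 3) t)
    (hC0 : C 0 = 1) (hS0 : S 0 = 0)
    (T : ℝ) (hT : 0 < T)
    (hperC : Function.Periodic C T) (hperS : Function.Periodic S T)
    (Ψ : ℝ × ℝ → ℝ × ℝ)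
    (hΨ : Ψ = fun p =>
      ((3 / T) ^ ((1 : ℝ) / 3) * p.1 ^ ((1 : ℝ) / 3) * C (p.2 * T),
       (3 / T) ^ ((2 : ℝ) / 3) * p.1 ^ ((2 : ℝ) / 3) * S (p.2 * T))) :
    ∀ p : ℝ × ℝ, 0 < p.1 → |(fderiv ℝ Ψ p).det| = 1 :=
  action_angle_measure_preserving_general C S hC hS hC0 hS0 T hT Ψ hΨ
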